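/- The retraction $\Psi_{n,0}:M_n\to D_{n-1}$ obtained as the composition $\psi_{n,1}\circ\cdots\circ\psi_{n,i(n)}$ equals $\Psi_n=(r_{n-1}|_{D_{n-1}})^{-1}\circ r_{n-1}$. -/

import Mathlib

open Set

noncomputable section

variable {Γ : Type*} [TopologicalSpace Γ] [DiscreteTopology Γ]

/-- `ℓ∞(Γ)`: the Banach space of bounded real functions on `Γ`
(carrying the discrete topology, so that boundedness is the only constraint). -/
abbrev Linf (Γ : Type*) [TopologicalSpace Γ] [DiscreteTopology Γ] : Type _ :=
  BoundedContinuousFunction Γ ℝ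

/-- The entire part of a real number, toward `0`: `[r] = sign(r)⌊|r|⌋`. -/
def ent (r : ℝ) : ℝ := Real.sign r * ⌊|r|⌋

lemma abs_ent_le (r : ℝ) : |ent r| ≤ |r| := by
  have hsign : |Real.sign r| ≤ 1 := by
    rcases lt_trichotomy r 0 with h | h | h
    · rw [Real.sign_of_neg h]; norm_num
    · rw [h, Real.sign_zero]; norm_num
    · rw [Real.sign_of_pos h]; norm_num
  have hfl : |(⌊|r|⌋ : ℝ)| ≤ |r| := by
    rw [abs_of_nonneg (by exact_mod_cast Int.floor_nonneg.mpr (abs_nonneg r))]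
    exact Int.floor_le _
  calc |ent r| = |Real.sign r| * |(⌊|r|⌋ : ℝ)| := abs_mul _ _
    _ ≤ 1 * |r| := mul_le_mul hsign hfl (abs_nonneg _) zero_le_one
    _ = |r| := one_mul _

/-- The coordinatewise quantization `f : ℓ∞(S) → ℓ∞(S)`, `f(x)(γ) = [x(γ)]`. -/
def quant (x : Linf Γ) : Linf Γ :=
  BoundedContinuousFunction.ofNormedAddCommGroup (fun γ => ent (x γ))
    continuous_of_discreteTopology ‖x‖ (fun γ => by
      rw [Real.norm_eq_abs]
      exact (abs_ent_le (x γ)).trans (by simpa using x.norm_coe_le_norm γ))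

/-- Scalar truncation at level `s`. -/
def truncFun (s t : ℝ) : ℝ := if |t| ≤ s then t else s * t / |t|

lemma abs_truncFun_le (s t : ℝ) : |truncFun s t| ≤ max |s| |t| := by
  unfold truncFun
  split_ifs with h
  · exact le_max_right _ _
  · by_cases ht : t = 0
    · simp [ht]
    · have hst : abs (s * t / |t|) = |s| := by
        rw [abs_div, abs_mul, abs_abs, mul_div_assoc, div_self (abs_ne_zero.mpr ht), mul_one]
      rw [hst]; exact le_max_left _ _

/-- The truncation of radius `s`: `T_s(x)(γ) = x(γ)` if `|x(γ)| ≤ s`,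
and `= s·x(γ)/|x(γ)|` otherwise. -/
def trunc (s : ℝ) (x : Linf Γ) : Linf Γ :=
  BoundedContinuousFunction.ofNormedAddCommGroup (fun γ => truncFun s (x γ))
    continuous_of_discreteTopology (max |s| ‖x‖) (fun γ => by
      rw [Real.norm_eq_abs]
      exact (abs_truncFun_le s (x γ)).trans
        (max_le_max le_rfl (by simpa using x.norm_coe_le_norm γ)))

/-- The restriction operator `r_S : ℓ∞(Γ) → ℓ∞(S)`, where `ℓ∞(S)` is identified
isometrically with the subspace of `ℓ∞(Γ)` of functions vanishing off `S`. -/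
def restr (S : Set Γ) (x : Linf Γ) : Linf Γ :=
  BoundedContinuousFunction.ofNormedAddCommGroup (S.indicator x)
    continuous_of_discreteTopology ‖x‖ (fun γ => by
      rw [Real.norm_eq_abs]
      by_cases h : γ ∈ S
      · rw [Set.indicator_of_mem h]
        simpa using x.norm_coe_le_norm γ
      · rw [Set.indicator_of_notMem h]
        simp)

/-- The ball `s·B_{ℓ∞(S)}`, viewed inside `ℓ∞(Γ)`: functions supported on `S`
of norm at most `s`. -/
def suppBall (S : Set Γ) (s : ℝ) : Set (Linf Γ) :=
  {x | (∀ γ ∉ S, x γ = 0) ∧ ‖x‖ ≤ s}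

/-- `chain T a b = T (a+1) ∘ ⋯ ∘ T b` (the identity if `b ≤ a`). -/
def chain {α : Type*} (T : ℕ → α → α) (a b : ℕ) : α → α :=
  Nat.rec id (fun k ih => ih ∘ T (a + k + 1)) (b - a)

/-- Bourgain–Delbaen data on `Γ`: a strictly increasing sequence of nonempty finite
sets `Γs n` (for `n ≥ 1`) with union `Γ`, together with compatible bounded linear
extension operators `i n : ℓ∞(Γ_n) → ℓ∞(Γ)` (realized as operators on `ℓ∞(Γ)`
factoring through the restriction `restr (Γs n)`), with norms bounded by the
positive integer `lam`. -/
structure BD (Γ : Type*) [TopologicalSpace Γ] [DiscreteTopology Γ] where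
  Γs : ℕ → Set Γ
  lam : ℕ
  i : ℕ → Linf Γ →L[ℝ] Linf Γ
  one_le_lam : 1 ≤ lam
  finite : ∀ n, 1 ≤ n → (Γs n).Finite
  nonempty : ∀ n, 1 ≤ n → (Γs n).Nonempty
  ssubset : ∀ n, 1 ≤ n → Γs n ⊂ Γs (n + 1)
  iUnion_eq : ⋃ n ∈ {k : ℕ | 1 ≤ k}, Γs n = Set.univ
  extension : ∀ n, 1 ≤ n → ∀ x : Linf Γ, ∀ γ ∈ Γs n, i n x γ = x γ
  factor : ∀ n, 1 ≤ n → ∀ x : Linf Γ, i n (restr (Γs n) x) = i n x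
  compatible : ∀ n m, 1 ≤ n → n < m → ∀ x : Linf Γ, i m (restr (Γs m) (i n x)) = i n x
  norm_i_le : ∀ n, 1 ≤ n → ‖i n‖ ≤ (lam : ℝ)

namespace BD

/-- `s n = λ^n`. -/
def s (B : BD Γ) (n : ℕ) : ℝ := (B.lam : ℝ) ^ n

/-- The sets `M_n` (with `M_0 = ∅`):
`M_n = M_{n-1} ∪ (f ∘ i_n)(f(s_n B_{ℓ∞(Γ_n)}) \ r_n(M_{n-1}))`. -/
def M (B : BD Γ) : ℕ → Set (Linf Γ)
  | 0 => ∅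
  | n + 1 =>
      M B n ∪
        (fun z => quant (B.i (n + 1) z)) ''
          (quant '' suppBall (B.Γs (n + 1)) (B.s (n + 1)) \ restr (B.Γs (n + 1)) '' M B n)

/-- `M = ⋃ n, M_n`. -/
def Mtot (B : BD Γ) : Set (Linf Γ) := ⋃ n, B.M n

/-- `C_n = (f ∘ i_{n+1} ∘ f ∘ T_{s_{n+1}} ∘ r_{n+1} ∘ i_n)
(f(s_{n+1}B_{ℓ∞(Γ_n)}) \ f(s_n B_{ℓ∞(Γ_n)}))`. -/
def C (B : BD Γ) (n : ℕ) : Set (Linf Γ) :=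
  (fun z => quant (B.i (n + 1) (quant (trunc (B.s (n + 1)) (restr (B.Γs (n + 1)) (B.i n z)))))) ''
    (quant '' suppBall (B.Γs n) (B.s (n + 1)) \ quant '' suppBall (B.Γs n) (B.s n))

/-- `D_n = M_n ∪ C_n`. -/
def D (B : BD Γ) (n : ℕ) : Set (Linf Γ) := B.M n ∪ B.C n

end BD
/-! `ψ_{n,i}` replaces the `Δ_n`-part `d_k + y_j` of `x_i` by `d_k + T_{‖y_j‖-1}(y_j)`, which
keeps `r_{n-1}`. The truncated function is an integer-valued function on `Δ_n` of smaller norm,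
hence an earlier term `y_{j'}` of the enumeration, and still lies in `f(s_n B)`. If `j' = 0` the
image has the same restriction to `Γ_n` as `d_k`, otherwise the same as `x_{i'}` where
`e_{i'} = (j', k)` precedes `e_i` lexicographically. Elements of `C_{n-1}` and of
`M_n \ M_{n-1}` are `f ∘ i_n` of their restriction to `Γ_n`, so `ψ_{n,i}(x_i)` lies in
`D_{n-1} ∪ {x_1, …, x_{i-1}}`. Composing, `Ψ_{n,0}` retracts `M_n` onto `D_{n-1}` and
preserves `r_{n-1}`. -/

open Function

lemma ent_intCast (m : ℤ) : ent m = m := by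
  rw [ent, Real.sign_intCast, ← Int.cast_abs, Int.floor_intCast]
  exact_mod_cast Int.sign_mul_abs m

lemma ent_zero : ent 0 = 0 := by simp [ent]

lemma exists_intCast_eq_ent (r : ℝ) : ∃ m : ℤ, ent r = m := by
  rcases Real.sign_apply_eq r with h | h | h <;> rw [ent, h]
  exacts [⟨-⌊|r|⌋, by push_cast; ring⟩, ⟨0, by simp⟩, ⟨⌊|r|⌋, one_mul _⟩]

lemma truncFun_zero (s : ℝ) : truncFun s 0 = 0 := by simp [truncFun]

lemma truncFun_eq_mul {s : ℝ} (hs : 0 ≤ s) (t : ℝ) : ∃ c ∈ Icc (0 : ℝ) 1, truncFun s t = c * t := by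
  unfold truncFun
  split_ifs with h
  · exact ⟨1, ⟨zero_le_one, le_rfl⟩, (one_mul t).symm⟩
  · have ht : 0 < |t| := hs.trans_lt (not_le.1 h)
    exact ⟨s / |t|, ⟨by positivity, (div_le_one ht).2 (not_le.1 h).le⟩, by ring⟩

lemma abs_truncFun_le_of_nonneg {s : ℝ} (hs : 0 ≤ s) (t : ℝ) : |truncFun s t| ≤ s := by
  unfold truncFun
  split_ifs with h
  · exact h
  · rw [abs_div, abs_mul, abs_abs, abs_of_nonneg hs, mul_div_assoc,
      div_self (hs.trans_lt (not_le.1 h)).ne', mul_one]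

/-- `truncFun s t` lies on the segment `[0, t]`, so `a + truncFun s t` lies on `[a, a + t]`. -/
lemma abs_add_truncFun_le {s : ℝ} (hs : 0 ≤ s) (a t : ℝ) :
    |a + truncFun s t| ≤ max |a| |a + t| := by
  obtain ⟨c, ⟨hc0, hc1⟩, hc⟩ := truncFun_eq_mul hs t
  calc |a + truncFun s t| = |(1 - c) * a + c * (a + t)| := by rw [hc]; ring_nf
    _ ≤ (1 - c) * |a| + c * |a + t| := by
        refine (abs_add_le _ _).trans_eq ?_
        rw [abs_mul, abs_mul, abs_of_nonneg (sub_nonneg.2 hc1), abs_of_nonneg hc0]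
    _ ≤ max |a| |a + t| := by
        nlinarith [mul_le_mul_of_nonneg_left (le_max_left |a| |a + t|) (sub_nonneg.2 hc1),
          mul_le_mul_of_nonneg_left (le_max_right |a| |a + t|) hc0]

lemma exists_intCast_eq_truncFun (s t : ℤ) : ∃ m : ℤ, truncFun s t = m := by
  unfold truncFun
  split_ifs
  · exact ⟨t, rfl⟩
  rcases eq_or_ne t 0 with rfl | ht
  · exact ⟨0, by simp⟩
  have ht' : (t : ℝ) ≠ 0 := Int.cast_ne_zero.2 ht
  rcases abs_choice (t : ℝ) with h | h <;> rw [h]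
  · exact ⟨s, mul_div_cancel_right₀ _ ht'⟩
  · exact ⟨-s, by rw [div_neg, mul_div_cancel_right₀ _ ht']; push_cast; rfl⟩

lemma quant_apply (x : Linf Γ) (γ : Γ) : quant x γ = ent (x γ) := rfl

lemma trunc_apply (s : ℝ) (x : Linf Γ) (γ : Γ) : trunc s x γ = truncFun s (x γ) := rfl

lemma coe_restr (S : Set Γ) (x : Linf Γ) : ⇑(restr S x) = S.indicator x := rfl

lemma abs_apply_le_norm (x : Linf Γ) (γ : Γ) : |x γ| ≤ ‖x‖ := by
  simpa using x.norm_coe_le_norm γ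

lemma norm_quant_le (x : Linf Γ) : ‖quant x‖ ≤ ‖x‖ :=
  (BoundedContinuousFunction.norm_le (norm_nonneg x)).2 fun γ =>
    (abs_ent_le (x γ)).trans (abs_apply_le_norm x γ)

lemma norm_trunc_le {s : ℝ} (hs : 0 ≤ s) (x : Linf Γ) : ‖trunc s x‖ ≤ s :=
  (BoundedContinuousFunction.norm_le hs).2 fun γ => abs_truncFun_le_of_nonneg hs (x γ)

def IsIntValued (x : Linf Γ) : Prop := ∀ γ, ∃ m : ℤ, x γ = m

namespace IsIntValued

lemma add {x z : Linf Γ} (hx : IsIntValued x) (hz : IsIntValued z) : IsIntValued (x + z) :=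
  fun γ => by
    obtain ⟨m, hm⟩ := hx γ
    obtain ⟨k, hk⟩ := hz γ
    exact ⟨m + k, by simp [hm, hk]⟩

lemma restr {x : Linf Γ} (hx : IsIntValued x) (S : Set Γ) : IsIntValued (restr S x) := fun γ => by
  by_cases hγ : γ ∈ S
  · simpa [coe_restr, hγ] using hx γ
  · exact ⟨0, by simp [coe_restr, hγ]⟩

lemma trunc {x : Linf Γ} (hx : IsIntValued x) {s : ℝ} (hs : ∃ m : ℤ, s = m) :
    IsIntValued (trunc s x) := fun γ => by
  obtain ⟨m, rfl⟩ := hs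
  obtain ⟨k, hk⟩ := hx γ
  rw [trunc_apply, hk]
  exact exists_intCast_eq_truncFun m k

/-- Each `|x γ|` is an integer `≤ ‖x‖`, hence `≤ ⌊‖x‖⌋`. -/
lemma exists_intCast_eq_norm {x : Linf Γ} (hx : IsIntValued x) : ∃ m : ℤ, ‖x‖ = m := by
  refine ⟨⌊‖x‖⌋, le_antisymm ((BoundedContinuousFunction.norm_le ?_).2 fun γ => ?_)
    (Int.floor_le _)⟩
  · exact Int.cast_nonneg (Int.floor_nonneg.2 (norm_nonneg x))
  · obtain ⟨m, hm⟩ := hx γ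
    rw [Real.norm_eq_abs, hm, ← Int.cast_abs]
    exact Int.cast_le.2 (Int.le_floor.2 (by rw [Int.cast_abs, ← hm]; exact abs_apply_le_norm x γ))

lemma one_le_norm {x : Linf Γ} (hx : IsIntValued x) (hne : x ≠ 0) : 1 ≤ ‖x‖ := by
  obtain ⟨m, hm⟩ := hx.exists_intCast_eq_norm
  have hpos := norm_pos_iff.2 hne
  rw [hm] at hpos ⊢
  exact_mod_cast Int.cast_pos.1 hpos

end IsIntValued

lemma isIntValued_quant (x : Linf Γ) : IsIntValued (quant x) :=
  fun γ => exists_intCast_eq_ent (x γ)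

lemma quant_eq_self {x : Linf Γ} (hx : IsIntValued x) : quant x = x :=
  BoundedContinuousFunction.ext fun γ => by
    obtain ⟨m, hm⟩ := hx γ
    rw [quant_apply, hm, ent_intCast]

lemma isIntValued_of_mem_quant_image {A : Set (Linf Γ)} {x : Linf Γ} (hx : x ∈ quant '' A) :
    IsIntValued x := by
  obtain ⟨z, -, rfl⟩ := hx
  exact isIntValued_quant z

lemma apply_eq_zero_of_mem_quant_image {S : Set Γ} {x : Linf Γ}
    (hx : x ∈ quant '' {z : Linf Γ | ∀ γ ∉ S, z γ = 0}) {γ : Γ} (hγ : γ ∉ S) : x γ = 0 := by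
  obtain ⟨z, hz, rfl⟩ := hx
  rw [quant_apply, hz γ hγ, ent_zero]

lemma mem_quant_image_suppBall_iff {S : Set Γ} {s : ℝ} {x : Linf Γ} :
    x ∈ quant '' suppBall S s ↔ x ∈ suppBall S s ∧ IsIntValued x := by
  refine ⟨?_, fun ⟨hx, hint⟩ => ⟨x, hx, quant_eq_self hint⟩⟩
  rintro ⟨u, ⟨huS, hus⟩, rfl⟩
  exact ⟨⟨fun γ hγ => by rw [quant_apply, huS γ hγ, ent_zero], (norm_quant_le u).trans hus⟩,
    isIntValued_quant u⟩

lemma add_trunc_mem_suppBall {S : Set Γ} {s r : ℝ} (hr : 0 ≤ r) {a g : Linf Γ}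
    (haS : ∀ γ ∉ S, a γ = 0) (has : ∀ γ ∈ S, |a γ| ≤ s) (h : a + g ∈ suppBall S s) :
    a + trunc r g ∈ suppBall S s := by
  obtain ⟨hS, hs⟩ := h
  have hgS : ∀ γ ∉ S, g γ = 0 := fun γ hγ => by
    simpa [haS γ hγ] using hS γ hγ
  have hvanish : ∀ γ ∉ S, (a + trunc r g) γ = 0 := fun γ hγ => by
    simp [trunc_apply, haS γ hγ, hgS γ hγ, truncFun_zero]
  refine ⟨hvanish, (BoundedContinuousFunction.norm_le ((norm_nonneg _).trans hs)).2 fun γ => ?_⟩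
  by_cases hγ : γ ∈ S
  · rw [Real.norm_eq_abs, BoundedContinuousFunction.coe_add, Pi.add_apply, trunc_apply]
    refine (abs_add_truncFun_le hr _ _).trans (max_le (has γ hγ) ?_)
    exact (abs_apply_le_norm (a + g) γ).trans hs
  · rw [hvanish γ hγ, norm_zero]
    exact (norm_nonneg _).trans hs

lemma restr_add_restr_sdiff {S T : Set Γ} (h : T ⊆ S) (x : Linf Γ) :
    restr T x + restr (S \ T) x = restr S x :=
  DFunLike.coe_injective <| by
    rw [BoundedContinuousFunction.coe_add, coe_restr, coe_restr, coe_restr,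
      Set.indicator_sdiff h, add_sub_cancel]

lemma restr_eq_of_restr_eq_add {S T : Set Γ} (hTS : T ⊆ S) {w d g : Linf Γ}
    (hg : ∀ γ ∈ T, g γ = 0) (h : restr S w = restr S d + g) : restr T w = restr T d := by
  refine BoundedContinuousFunction.ext fun γ => ?_
  by_cases hγ : γ ∈ T
  · simpa [coe_restr, hγ, hTS hγ, hg γ hγ] using DFunLike.congr_fun h γ
  · simp [coe_restr, hγ]

lemma exists_lt_eq_trunc {S : Set Γ} {y : ℕ → Linf Γ} (hy0 : y 0 = 0) (hyinj : Injective y)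
    (hyrange : range y = quant '' {z : Linf Γ | ∀ γ ∉ S, z γ = 0})
    (hymono : ∀ j₁ j₂, j₁ ≤ j₂ → ‖y j₁‖ ≤ ‖y j₂‖) {j : ℕ} (hj : 1 ≤ j) :
    1 ≤ ‖y j‖ ∧ ∃ j' < j, y j' = trunc (‖y j‖ - 1) (y j) := by
  have hmem : ∀ j, y j ∈ quant '' {z : Linf Γ | ∀ γ ∉ S, z γ = 0} := fun j =>
    hyrange ▸ mem_range_self j
  have hint := isIntValued_of_mem_quant_image (hmem j)
  have hnorm : 1 ≤ ‖y j‖ :=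
    hint.one_le_norm fun h => by have := hyinj (h.trans hy0.symm); omega
  obtain ⟨k, hk⟩ := hint.exists_intCast_eq_norm
  have htint := hint.trunc (s := ‖y j‖ - 1) ⟨k - 1, by rw [hk]; push_cast; rfl⟩
  have htS : ∀ γ ∉ S, trunc (‖y j‖ - 1) (y j) γ = 0 := fun γ hγ => by
    rw [trunc_apply, apply_eq_zero_of_mem_quant_image (hmem j) hγ, truncFun_zero]
  obtain ⟨j', hj'⟩ : trunc (‖y j‖ - 1) (y j) ∈ range y :=
    hyrange ▸ ⟨_, htS, quant_eq_self htint⟩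
  refine ⟨hnorm, j', not_le.1 fun hjj' => ?_, hj'⟩
  have := (hymono j j' hjj').trans_eq (congrArg norm hj')
  linarith [norm_trunc_le (sub_nonneg.2 hnorm) (y j)]

lemma exists_mem_Icc_sub_one_eq_of_lt {e : ℕ → ℕ × ℕ} {I i : ℕ} {p : ℕ × ℕ}
    (hlex : StrictMonoOn (toLex ∘ e) (Icc 1 I)) (hi : i ∈ Icc 1 I)
    (hp : ∃ i', 1 ≤ i' ∧ i' ≤ I ∧ e i' = p) (hlt : toLex p < toLex (e i)) :
    ∃ i' ∈ Icc 1 (i - 1), e i' = p := by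
  obtain ⟨i', hi', hi'I, rfl⟩ := hp
  have := (hlex.lt_iff_lt ⟨hi', hi'I⟩ hi).1 hlt
  exact ⟨i', ⟨hi', by omega⟩, rfl⟩

lemma chain_succ {α : Type*} (T : ℕ → α → α) {a b : ℕ} (h : a ≤ b) :
    chain T a (b + 1) = chain T a b ∘ T (b + 1) := by
  unfold chain
  rw [Nat.sub_add_comm h]
  show _ ∘ T (a + (b - a) + 1) = _
  rw [Nat.add_sub_cancel' h]

lemma chain_mem_and_eq_of_retract {α β : Type*} {ψ : ℕ → α → α} {ρ : α → β} {A : Set α}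
    {x : ℕ → α} {N : ℕ}
    (hfix : ∀ i, 1 ≤ i → i ≤ N → ∀ z ∈ A ∪ x '' Icc 1 (i - 1), ψ i z = z)
    (hstep : ∀ i, 1 ≤ i → i ≤ N →
      ψ i (x i) ∈ A ∪ x '' Icc 1 (i - 1) ∧ ρ (ψ i (x i)) = ρ (x i))
    {z : α} (hz : z ∈ A ∪ x '' Icc 1 N) : chain ψ 0 N z ∈ A ∧ ρ (chain ψ 0 N z) = ρ z := by
  induction N generalizing z with
  | zero =>
    rcases hz with hz | ⟨i, ⟨h1, h0⟩, -⟩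
    exacts [⟨hz, rfl⟩, absurd (h1.trans h0) (by norm_num)]
  | succ N ih =>
    have hψ : ψ (N + 1) z ∈ A ∪ x '' Icc 1 N ∧ ρ (ψ (N + 1) z) = ρ z := by
      by_cases hz' : z ∈ A ∪ x '' Icc 1 N
      · exact ⟨(hfix (N + 1) (by omega) le_rfl z hz').symm ▸ hz',
          by rw [hfix (N + 1) (by omega) le_rfl z hz']⟩
      · obtain ⟨i, ⟨hi1, hiN⟩, rfl⟩ := hz.resolve_left fun h => hz' (Or.inl h)
        obtain rfl : i = N + 1 := by
          by_contra hne
          exact hz' (Or.inr ⟨i, ⟨hi1, by omega⟩, rfl⟩)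
        exact hstep (N + 1) (by omega) le_rfl
    obtain ⟨hmem, heq⟩ := ih (fun i h1 h2 => hfix i h1 (by omega))
      (fun i h1 h2 => hstep i h1 (by omega)) hψ.1
    rw [chain_succ ψ (Nat.zero_le N), comp_apply]
    exact ⟨hmem, heq.trans hψ.2⟩

namespace BD

variable (B : BD Γ)

lemma s_mono {a b : ℕ} (h : a ≤ b) : B.s a ≤ B.s b :=
  pow_le_pow_right₀ (by exact_mod_cast B.one_le_lam) h

lemma s_nonneg (m : ℕ) : 0 ≤ B.s m := pow_nonneg (Nat.cast_nonneg _) m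

lemma M_subset_succ (m : ℕ) : B.M m ⊆ B.M (m + 1) := subset_union_left

variable {B}

lemma isIntValued_of_mem_M {m : ℕ} {u : Linf Γ} (hu : u ∈ B.M m) : IsIntValued u := by
  induction m with
  | zero => exact absurd hu (notMem_empty u)
  | succ m ih =>
    rcases hu with hu | ⟨z, -, rfl⟩
    exacts [ih hu, isIntValued_quant _]

lemma isIntValued_of_mem_D {m : ℕ} {u : Linf Γ} (hu : u ∈ B.D m) : IsIntValued u := by
  rcases hu with hu | ⟨z, -, rfl⟩
  exacts [isIntValued_of_mem_M hu, isIntValued_quant _]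

lemma norm_le_of_mem_M {m : ℕ} {u : Linf Γ} (hu : u ∈ B.M m) : ‖u‖ ≤ B.s (m + 1) := by
  induction m with
  | zero => exact absurd hu (notMem_empty u)
  | succ m ih =>
    rcases hu with hu | ⟨z, ⟨hz, -⟩, rfl⟩
    · exact (ih hu).trans (B.s_mono (Nat.le_succ _))
    have hzs := (mem_quant_image_suppBall_iff.1 hz).1.2
    calc ‖quant (B.i (m + 1) z)‖ ≤ ‖B.i (m + 1) z‖ := norm_quant_le _
      _ ≤ ‖B.i (m + 1)‖ * ‖z‖ := (B.i (m + 1)).le_opNorm z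
      _ ≤ B.lam * B.s (m + 1) :=
          mul_le_mul (B.norm_i_le (m + 1) (by omega)) hzs (norm_nonneg z) (Nat.cast_nonneg _)
      _ = B.s (m + 1 + 1) := by simp only [s]; ring

lemma abs_apply_le_of_mem_D {m : ℕ} {u : Linf Γ} (hu : u ∈ B.D m) {γ : Γ}
    (hγ : γ ∈ B.Γs (m + 1)) : |u γ| ≤ B.s (m + 1) := by
  rcases hu with hu | ⟨z, -, rfl⟩
  · exact (abs_apply_le_norm u γ).trans (norm_le_of_mem_M hu)
  rw [quant_apply, B.extension (m + 1) (by omega) _ γ hγ, quant_apply, trunc_apply]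
  exact (abs_ent_le _).trans ((abs_ent_le _).trans (abs_truncFun_le_of_nonneg (B.s_nonneg _) _))

lemma restr_quant_i {m : ℕ} (hm : 1 ≤ m) {z : Linf Γ} (hz : IsIntValued z)
    (hzS : ∀ γ ∉ B.Γs m, z γ = 0) : restr (B.Γs m) (quant (B.i m z)) = z := by
  refine BoundedContinuousFunction.ext fun γ => ?_
  by_cases hγ : γ ∈ B.Γs m
  · obtain ⟨k, hk⟩ := hz γ
    rw [coe_restr, Set.indicator_of_mem hγ, quant_apply, B.extension m hm z γ hγ, hk, ent_intCast]
  · rw [coe_restr, Set.indicator_of_notMem hγ, hzS γ hγ]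

lemma quant_i_restr_of_mem_C {m : ℕ} {u : Linf Γ} (hu : u ∈ B.C m) :
    quant (B.i (m + 1) (restr (B.Γs (m + 1)) u)) = u := by
  obtain ⟨z, -, rfl⟩ := hu
  rw [B.restr_quant_i (Nat.le_add_left 1 m) (isIntValued_quant _) fun γ hγ => by
    rw [quant_apply, trunc_apply, coe_restr, Set.indicator_of_notMem hγ, truncFun_zero, ent_zero]]

lemma quant_i_restr_of_mem_M_succ {m : ℕ} {u : Linf Γ} (hu : u ∈ B.M (m + 1))
    (hnew : u ∉ B.M m) : quant (B.i (m + 1) (restr (B.Γs (m + 1)) u)) = u ∧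
      restr (B.Γs (m + 1)) u ∉ restr (B.Γs (m + 1)) '' B.M m := by
  rcases hu with hu | ⟨z, ⟨hz, hznew⟩, rfl⟩
  · exact absurd hu hnew
  obtain ⟨⟨hzS, -⟩, hzint⟩ := mem_quant_image_suppBall_iff.1 hz
  rw [B.restr_quant_i (Nat.le_add_left 1 m) hzint hzS]
  exact ⟨rfl, hznew⟩

/-- Both `w ∉ M m` and `u` are of the form `f (i_{m+1} (r_{m+1} ·))` (unless `u ∈ M m`, which
`r_{m+1} w ∉ r_{m+1} (M m)` excludes), so equal restrictions force `w = u`. -/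
lemma mem_M_or_eq_of_restr_eq {m : ℕ} {w u : Linf Γ} (hw : w ∈ B.M (m + 1))
    (hu : u ∈ B.M (m + 1) ∪ B.C m) (h : restr (B.Γs (m + 1)) w = restr (B.Γs (m + 1)) u) :
    w ∈ B.M m ∨ w = u := by
  by_cases hwM : w ∈ B.M m
  · exact Or.inl hwM
  obtain ⟨hwq, hwnew⟩ := quant_i_restr_of_mem_M_succ hw hwM
  have huq : quant (B.i (m + 1) (restr (B.Γs (m + 1)) u)) = u := by
    rcases hu with hu | hu
    · by_cases huM : u ∈ B.M m
      · exact absurd ⟨u, huM, h.symm⟩ hwnew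
      · exact (quant_i_restr_of_mem_M_succ hu huM).1
    · exact quant_i_restr_of_mem_C hu
  exact Or.inr (by rw [← hwq, h, huq])

lemma mem_D_union_of_restr_eq_add {m : ℕ} {d w g : Linf Γ} {X : Set (Linf Γ)}
    (hd : d ∈ B.D m) (hw : w ∈ B.M (m + 1))
    (hwr : restr (B.Γs (m + 1)) w = restr (B.Γs (m + 1)) d + g)
    (hX : g ≠ 0 → ∃ u ∈ X, u ∈ B.M (m + 1) ∧
      restr (B.Γs (m + 1)) u = restr (B.Γs (m + 1)) d + g) :
    w ∈ B.D m ∪ X := by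
  by_cases hg : g = 0
  · rw [hg, add_zero] at hwr
    rcases mem_M_or_eq_of_restr_eq hw (hd.imp_left fun h => B.M_subset_succ m h) hwr with h | rfl
    exacts [Or.inl (Or.inl h), Or.inl hd]
  · obtain ⟨u, huX, huM, hur⟩ := hX hg
    rcases mem_M_or_eq_of_restr_eq hw (Or.inl huM) (hwr.trans hur.symm) with h | rfl
    exacts [Or.inl (Or.inl h), Or.inr huX]

lemma restr_sdiff_add_trunc_mem {m : ℕ} {d g : Linf Γ} (hd : d ∈ B.D m) {r : ℝ} (hr : 0 ≤ r)
    (hint : IsIntValued (trunc r g))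
    (h : restr (B.Γs (m + 1) \ B.Γs m) d + g ∈
      quant '' suppBall (B.Γs (m + 1) \ B.Γs m) (B.s (m + 1))) :
    restr (B.Γs (m + 1) \ B.Γs m) d + trunc r g ∈
      quant '' suppBall (B.Γs (m + 1) \ B.Γs m) (B.s (m + 1)) := by
  rw [mem_quant_image_suppBall_iff] at h ⊢
  refine ⟨add_trunc_mem_suppBall hr (fun γ hγ => ?_) (fun γ hγ => ?_) h.1,
    ((isIntValued_of_mem_D hd).restr _).add hint⟩
  · rw [coe_restr, Set.indicator_of_notMem hγ]
  · rw [coe_restr, Set.indicator_of_mem hγ]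
    exact abs_apply_le_of_mem_D hd hγ.1

end BD

theorem Psi_zero_eq_Psi_general (B : BD Γ) (n : ℕ) (hn : 2 ≤ n)
    (y : ℕ → Linf Γ) (hy0 : y 0 = 0) (hyinj : Function.Injective y)
    (hyrange : Set.range y =
      quant '' {z : Linf Γ | ∀ γ ∉ B.Γs n \ B.Γs (n - 1), z γ = 0})
    (hymono : ∀ j₁ j₂, j₁ ≤ j₂ → ‖y j₁‖ ≤ ‖y j₂‖)
    (kn : ℕ) (d : ℕ → Linf Γ)
    (hd_range : d '' Set.Icc 1 kn = B.D (n - 1))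
    (I : ℕ) (e : ℕ → ℕ × ℕ)
    (he_mem : ∀ i, 1 ≤ i → i ≤ I → 1 ≤ (e i).1 ∧ 1 ≤ (e i).2 ∧ (e i).2 ≤ kn ∧
      restr (B.Γs n \ B.Γs (n - 1)) (d (e i).2) + y (e i).1 ∈
        quant '' suppBall (B.Γs n \ B.Γs (n - 1)) (B.s n))
    (he_surj : ∀ p : ℕ × ℕ, 1 ≤ p.1 → 1 ≤ p.2 → p.2 ≤ kn →
      restr (B.Γs n \ B.Γs (n - 1)) (d p.2) + y p.1 ∈
        quant '' suppBall (B.Γs n \ B.Γs (n - 1)) (B.s n) →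
      ∃ i, 1 ≤ i ∧ i ≤ I ∧ e i = p)
    (he_lex : ∀ i₁ i₂, 1 ≤ i₁ → i₁ < i₂ → i₂ ≤ I →
      (e i₁).1 < (e i₂).1 ∨ ((e i₁).1 = (e i₂).1 ∧ (e i₁).2 < (e i₂).2))
    (x : ℕ → Linf Γ)
    (hx : ∀ i, 1 ≤ i → i ≤ I → x i ∈ B.M n ∧
      restr (B.Γs n) (x i) =
        restr (B.Γs (n - 1)) (d (e i).2) +
          restr (B.Γs n \ B.Γs (n - 1)) (d (e i).2) + y (e i).1)
    (hx_range : x '' Set.Icc 1 I = B.M n \ B.D (n - 1))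
    (ψ : ℕ → Linf Γ → Linf Γ)
    (hψ_val : ∀ i, 1 ≤ i → i ≤ I → ψ i (x i) ∈ B.M n ∧
      restr (B.Γs n) (ψ i (x i)) =
        restr (B.Γs (n - 1)) (d (e i).2) +
          restr (B.Γs n \ B.Γs (n - 1)) (d (e i).2) +
          trunc (‖y (e i).1‖ - 1) (y (e i).1))
    (hψ_id : ∀ i, 1 ≤ i → i ≤ I →
      ∀ z ∈ B.D (n - 1) ∪ x '' Set.Icc 1 (i - 1), ψ i z = z)
    : ∀ z ∈ B.M n, chain ψ 0 I z ∈ B.D (n - 1) ∧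
      restr (B.Γs (n - 1)) (chain ψ 0 I z) = restr (B.Γs (n - 1)) z := by
  obtain ⟨m, rfl⟩ : ∃ m, n = m + 1 := ⟨n - 1, by omega⟩
  simp only [Nat.add_sub_cancel] at *
  have hsub : B.Γs m ⊆ B.Γs (m + 1) := (B.ssubset m (by omega)).subset
  simp only [restr_add_restr_sdiff hsub] at hx hψ_val
  have hy : ∀ j, y j ∈ quant '' {z : Linf Γ | ∀ γ ∉ B.Γs (m + 1) \ B.Γs m, z γ = 0} :=
    fun j => hyrange ▸ mem_range_self j
  have hyΓ : ∀ j, ∀ γ ∈ B.Γs m, y j γ = 0 := fun j γ hγ =>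
    apply_eq_zero_of_mem_quant_image (hy j) fun h => h.2 hγ
  have hlex : StrictMonoOn (toLex ∘ e) (Icc 1 I) := fun a ha b hb hab =>
    Prod.Lex.toLex_lt_toLex.2 (he_lex a b ha.1 hab hb.2)
  have hstep : ∀ i, 1 ≤ i → i ≤ I → ψ i (x i) ∈ B.D m ∪ x '' Icc 1 (i - 1) ∧
      restr (B.Γs m) (ψ i (x i)) = restr (B.Γs m) (x i) := by
    intro i hi hiI
    obtain ⟨hj, hk, hkn, hE⟩ := he_mem i hi hiI
    obtain ⟨hnorm, j', hj'j, hyj'⟩ := exists_lt_eq_trunc hy0 hyinj hyrange hymono hj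
    have hd : d (e i).2 ∈ B.D m := hd_range ▸ mem_image_of_mem d ⟨hk, hkn⟩
    obtain ⟨hwM, hwr⟩ := hψ_val i hi hiI
    rw [← hyj'] at hwr
    refine ⟨BD.mem_D_union_of_restr_eq_add hd hwM hwr fun hne => ?_,
      (restr_eq_of_restr_eq_add hsub (hyΓ _) hwr).trans
        (restr_eq_of_restr_eq_add hsub (hyΓ _) (hx i hi hiI).2).symm⟩
    obtain ⟨i', ⟨hi'1, hi'i⟩, hei'⟩ := exists_mem_Icc_sub_one_eq_of_lt hlex ⟨hi, hiI⟩
      (he_surj (j', (e i).2) (Nat.one_le_iff_ne_zero.2 fun h : j' = 0 => hne (h ▸ hy0)) hk hkn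
        (hyj' ▸ BD.restr_sdiff_add_trunc_mem hd (sub_nonneg.2 hnorm)
          (hyj' ▸ isIntValued_of_mem_quant_image (hy j')) hE))
      (Prod.Lex.toLex_lt_toLex.2 (Or.inl hj'j))
    have hxi' := hx i' hi'1 (by omega)
    exact ⟨x i', ⟨i', ⟨hi'1, hi'i⟩, rfl⟩, hxi'.1, by rw [hxi'.2, hei']⟩
  intro z hz
  refine chain_mem_and_eq_of_retract hψ_id hstep ?_
  by_cases hzD : z ∈ B.D m
  exacts [Or.inl hzD, Or.inr (hx_range ▸ ⟨hz, hzD⟩)]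

/-- Proposition (Step 3): `Ψ_{n,0} = ψ_{n,1} ∘ ⋯ ∘ ψ_{n,i(n)}` equals
`Ψ_n = (r_{n-1}|_{D_{n-1}})⁻¹ ∘ r_{n-1}` on `M_n`. -/
theorem Psi_zero_eq_Psi (B : BD Γ) (n : ℕ) (hn : 2 ≤ n)
    (y : ℕ → Linf Γ) (hy0 : y 0 = 0) (hyinj : Function.Injective y)
    (hyrange : Set.range y =
      quant '' {z : Linf Γ | ∀ γ ∉ B.Γs n \ B.Γs (n - 1), z γ = 0})
    (hymono : ∀ j₁ j₂, j₁ ≤ j₂ → ‖y j₁‖ ≤ ‖y j₂‖)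
    (kn : ℕ) (d : ℕ → Linf Γ)
    (hd_inj : Set.InjOn d (Set.Icc 1 kn))
    (hd_range : d '' Set.Icc 1 kn = B.D (n - 1))
    (I : ℕ) (e : ℕ → ℕ × ℕ)
    (he_mem : ∀ i, 1 ≤ i → i ≤ I → 1 ≤ (e i).1 ∧ 1 ≤ (e i).2 ∧ (e i).2 ≤ kn ∧
      restr (B.Γs n \ B.Γs (n - 1)) (d (e i).2) + y (e i).1 ∈
        quant '' suppBall (B.Γs n \ B.Γs (n - 1)) (B.s n))
    (he_surj : ∀ p : ℕ × ℕ, 1 ≤ p.1 → 1 ≤ p.2 → p.2 ≤ kn →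
      restr (B.Γs n \ B.Γs (n - 1)) (d p.2) + y p.1 ∈
        quant '' suppBall (B.Γs n \ B.Γs (n - 1)) (B.s n) →
      ∃ i, 1 ≤ i ∧ i ≤ I ∧ e i = p)
    (he_lex : ∀ i₁ i₂, 1 ≤ i₁ → i₁ < i₂ → i₂ ≤ I →
      (e i₁).1 < (e i₂).1 ∨ ((e i₁).1 = (e i₂).1 ∧ (e i₁).2 < (e i₂).2))
    (x : ℕ → Linf Γ)
    (hx : ∀ i, 1 ≤ i → i ≤ I → x i ∈ B.M n ∧
      restr (B.Γs n) (x i) =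
        restr (B.Γs (n - 1)) (d (e i).2) +
          restr (B.Γs n \ B.Γs (n - 1)) (d (e i).2) + y (e i).1)
    (hx_range : x '' Set.Icc 1 I = B.M n \ B.D (n - 1))
    (ψ : ℕ → Linf Γ → Linf Γ)
    (hψ_val : ∀ i, 1 ≤ i → i ≤ I → ψ i (x i) ∈ B.M n ∧
      restr (B.Γs n) (ψ i (x i)) =
        restr (B.Γs (n - 1)) (d (e i).2) +
          restr (B.Γs n \ B.Γs (n - 1)) (d (e i).2) +
          trunc (‖y (e i).1‖ - 1) (y (e i).1))
    (hψ_id : ∀ i, 1 ≤ i → i ≤ I →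
      ∀ z ∈ B.D (n - 1) ∪ x '' Set.Icc 1 (i - 1), ψ i z = z)
    : ∀ z ∈ B.M n, chain ψ 0 I z ∈ B.D (n - 1) ∧
      restr (B.Γs (n - 1)) (chain ψ 0 I z) = restr (B.Γs (n - 1)) z :=
  Psi_zero_eq_Psi_general B n hn y hy0 hyinj hyrange hymono kn d hd_range I e he_mem he_surj he_lex
    x hx hx_range ψ hψ_val hψ_id
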